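/- For any integers 1 ≤ s ≤ d, any v, ṽ ∈ V(s,d) having the same support, any positive definite d×d matrix Σ, and any real symmetric d×d matrix M, it holds that | |v_Σᵀ M v_Σ| − |ṽ_Σᵀ M ṽ_Σ| | ≤ 2 γ_s(Σ) ‖v − ṽ‖₂ · sup_{w ∈ V(s,d)} |w_Σᵀ M w_Σ|. -/

import Mathlib

open MeasureTheory ProbabilityTheory Filter Finset
open scoped ENNReal NNReal

noncomputable section

/-- The set of `s`-sparse unit vectors in `ℝ^d`. -/
def sparseUnit (s d : ℕ) : Set (Fin d → ℝ) :=
  {v | ∑ i, (v i)^2 = 1 ∧ (Finset.univ.filter fun i => v i ≠ 0).card ≤ s}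

/-- Quadratic form `vᵀ M v`. -/
def quadForm {d : ℕ} (M : Matrix (Fin d) (Fin d) ℝ) (v : Fin d → ℝ) : ℝ :=
  ∑ i, ∑ j, v i * M i j * v j

/-- `s`-sparse largest eigenvalue. -/
def lamMaxS (s d : ℕ) (M : Matrix (Fin d) (Fin d) ℝ) : ℝ :=
  sSup (quadForm M '' sparseUnit s d)

/-- `s`-sparse smallest eigenvalue. -/
def lamMinS (s d : ℕ) (M : Matrix (Fin d) (Fin d) ℝ) : ℝ :=
  sInf (quadForm M '' sparseUnit s d)

/-- The restricted condition number `γ_s(M)`. -/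
def gammaS (s d : ℕ) (M : Matrix (Fin d) (Fin d) ℝ) : ℝ :=
  Real.sqrt (lamMaxS s d M / lamMinS s d M)

/-- Euclidean norm on `Fin d → ℝ`. -/
def l2norm {d : ℕ} (v : Fin d → ℝ) : ℝ := Real.sqrt (∑ i, (v i)^2)

/-- `ψ_α` Orlicz norm (valued in `ℝ≥0∞`). -/
def eOrlicz {Ω : Type*} [MeasurableSpace Ω] (P : Measure Ω) (α : ℝ) (X : Ω → ℝ) : ℝ≥0∞ :=
  sInf {C : ℝ≥0∞ | C ≠ 0 ∧
    ∫⁻ ω, ENNReal.ofReal (Real.exp ((|X ω| / C.toReal) ^ α) - 1) ∂P ≤ 1}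

/-- Outer product `x xᵀ`. -/
def outerProd {d : ℕ} (x : Fin d → ℝ) : Matrix (Fin d) (Fin d) ℝ :=
  Matrix.of fun i j => x i * x j

/-- Sample covariance matrix of vectors `x 1, …, x n`. -/
def sampleCov {n d : ℕ} (x : Fin n → Fin d → ℝ) : Matrix (Fin d) (Fin d) ℝ :=
  (n : ℝ)⁻¹ • ∑ i, outerProd (x i)

/-- A centered Gaussian random vector: every linear combination of the coordinates is
a centered real Gaussian. -/
def IsCenteredGaussianVec {Ω : Type*} [MeasurableSpace Ω] (P : Measure Ω) {p : ℕ}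
    (G : Fin p → Ω → ℝ) : Prop :=
  ∀ a : Fin p → ℝ, ∃ v : NNReal,
    Measure.map (fun ω => ∑ j, a j * G j ω) P = gaussianReal 0 v

/-- The statistic `Q̂_max`. -/
def QmaxStat (s : ℕ) {n d : ℕ} (S : Matrix (Fin d) (Fin d) ℝ) (x : Fin n → Fin d → ℝ) : ℝ :=
  sSup ((fun v => |Real.sqrt n * quadForm (sampleCov x - S) v / quadForm S v|) '' sparseUnit s d)

/-- `γ_n(s,d) = max(s log(γ_s e d / s), s log n)`. -/
def gammaN (s d n : ℕ) (S : Matrix (Fin d) (Fin d) ℝ) : ℝ :=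
  max ((s : ℝ) * Real.log (gammaS s d S * Real.exp 1 * d / s)) ((s : ℝ) * Real.log n)

end

/-- `v_Σ = v / ‖v‖_Σ` where `‖v‖_Σ = (vᵀ Σ v)^{1/2}`. -/
noncomputable def sigNormalize {d : ℕ} (S : Matrix (Fin d) (Fin d) ℝ) (v : Fin d → ℝ) :
    Fin d → ℝ :=
  (Real.sqrt (quadForm S v))⁻¹ • v

/-!
Write `a = v_Σ`, `b = w_Σ`, `Q` for the supremum and `W` for the coordinate subspace of vectors
supported in `supp v`. Every nonzero `z ∈ W` is a positive multiple of an `s`-sparse unit vector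
and `z_Σ` is invariant under positive scaling, so `|zᵀ M z| ≤ Q ‖z‖²_Σ` on `W`. Polarization and
the parallelogram law upgrade this to `|xᵀ M y| ≤ Q ‖x‖_Σ ‖y‖_Σ` on `W`, which we apply to
`aᵀ M a - bᵀ M b = (a - b)ᵀ M (a + b)`, where `‖a + b‖_Σ ≤ 2`. Finally, in any inner product space
`‖x‖ ‖y‖ ‖x/‖x‖ - y/‖y‖‖² = ‖x - y‖² - (‖x‖ - ‖y‖)²`, so
`λ_{min,s} ‖a - b‖²_Σ ≤ ‖v - w‖²_Σ ≤ λ_{max,s} ‖v - w‖²`.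
-/

namespace LinearMap.BilinForm

variable {V : Type*} [AddCommGroup V] [Module ℝ V] {B P : LinearMap.BilinForm ℝ V}

lemma IsSymm.apply_add_add_apply_sub_sub (hP : P.IsSymm) (x y : V) :
    P (x + y) (x + y) + P (x - y) (x - y) = 2 * P x x + 2 * P y y := by
  simp only [map_add, map_sub, LinearMap.add_apply, LinearMap.sub_apply]
  rw [hP.eq y x]
  ring

lemma IsSymm.apply_add_add_sub_apply_sub_sub (hB : B.IsSymm) (x y : V) :
    B (x + y) (x + y) - B (x - y) (x - y) = 4 * B x y := by
  simp only [map_add, map_sub, LinearMap.add_apply, LinearMap.sub_apply]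
  rw [hB.eq y x]
  ring

lemma IsSymm.apply_sub_add (hB : B.IsSymm) (x y : V) : B (x - y) (x + y) = B x x - B y y := by
  simp only [map_add, map_sub, LinearMap.sub_apply]
  rw [hB.eq y x]
  ring

lemma apply_inv_sqrt_smul_self {x : V} (hx : 0 < P x x) :
    P ((√(P x x))⁻¹ • x) ((√(P x x))⁻¹ • x) = 1 := by
  simp only [map_smul, LinearMap.smul_apply, smul_eq_mul, ← mul_assoc, ← mul_inv,
    Real.mul_self_sqrt hx.le]
  exact inv_mul_cancel₀ hx.ne'

lemma abs_apply_le_of_apply_self_eq_one (hB : B.IsSymm) (hP : P.IsSymm) {W : Submodule ℝ V}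
    {Q : ℝ} (hBW : ∀ z ∈ W, |B z z| ≤ Q * P z z) {x y : V} (hx : x ∈ W) (hy : y ∈ W)
    (hx1 : P x x = 1) (hy1 : P y y = 1) : |B x y| ≤ Q := by
  have h4 : 4 * |B x y| ≤ 4 * Q :=
    calc 4 * |B x y| = |B (x + y) (x + y) - B (x - y) (x - y)| := by
          rw [hB.apply_add_add_sub_apply_sub_sub, abs_mul, abs_of_pos (four_pos : (0 : ℝ) < 4)]
      _ ≤ |B (x + y) (x + y)| + |B (x - y) (x - y)| := abs_sub _ _
      _ ≤ Q * P (x + y) (x + y) + Q * P (x - y) (x - y) :=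
          add_le_add (hBW _ (W.add_mem hx hy)) (hBW _ (W.sub_mem hx hy))
      _ = 4 * Q := by rw [← mul_add, hP.apply_add_add_apply_sub_sub, hx1, hy1]; ring
  linarith

lemma abs_apply_le_of_abs_apply_self_le (hB : B.IsSymm) (hP : P.IsSymm)
    (hPpos : ∀ x, x ≠ 0 → 0 < P x x) {W : Submodule ℝ V} {Q : ℝ}
    (hBW : ∀ z ∈ W, |B z z| ≤ Q * P z z) {x y : V} (hx : x ∈ W) (hy : y ∈ W) :
    |B x y| ≤ Q * √(P x x) * √(P y y) := by
  rcases eq_or_ne x 0 with rfl | hx0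
  · simp
  rcases eq_or_ne y 0 with rfl | hy0
  · simp
  have hPx := hPpos x hx0
  have hPy := hPpos y hy0
  have hnorm := abs_apply_le_of_apply_self_eq_one hB hP hBW
    (W.smul_mem (√(P x x))⁻¹ hx) (W.smul_mem (√(P y y))⁻¹ hy)
    (apply_inv_sqrt_smul_self hPx) (apply_inv_sqrt_smul_self hPy)
  have hsx : 0 < √(P x x) := Real.sqrt_pos.2 hPx
  have hsy : 0 < √(P y y) := Real.sqrt_pos.2 hPy
  simp only [map_smul, LinearMap.smul_apply, smul_eq_mul, abs_mul, abs_inv, abs_of_pos hsx,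
    abs_of_pos hsy] at hnorm
  rw [inv_mul_le_iff₀ hsy, inv_mul_le_iff₀ hsx] at hnorm
  linarith

lemma sqrt_mul_sqrt_mul_apply_normalize_sub_le (hP : P.IsSymm) {x y : V} (hx : 0 < P x x)
    (hy : 0 < P y y) :
    √(P x x) * √(P y y) *
        P ((√(P x x))⁻¹ • x - (√(P y y))⁻¹ • y) ((√(P x x))⁻¹ • x - (√(P y y))⁻¹ • y) ≤
      P (x - y) (x - y) := by
  simp only [map_sub, map_smul, LinearMap.sub_apply, LinearMap.smul_apply, smul_eq_mul]
  rw [hP.eq y x]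
  have hx2 := Real.sq_sqrt hx.le
  have hy2 := Real.sq_sqrt hy.le
  set α := √(P x x)
  set β := √(P y y)
  have hα : 0 < α := Real.sqrt_pos.2 hx
  have hβ : 0 < β := Real.sqrt_pos.2 hy
  rw [← hx2, ← hy2]
  field_simp
  nlinarith [sq_nonneg (α - β)]

end LinearMap.BilinForm

section SparseQuadForm

variable {s d : ℕ}

lemma quadForm_eq_toBilin' (M : Matrix (Fin d) (Fin d) ℝ) (x : Fin d → ℝ) :
    quadForm M x = M.toBilin' x x :=
  (Matrix.toBilin'_apply M x x).symm

lemma continuous_quadForm (M : Matrix (Fin d) (Fin d) ℝ) : Continuous (quadForm M) := by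
  unfold quadForm
  fun_prop

lemma quadForm_smul (M : Matrix (Fin d) (Fin d) ℝ) (c : ℝ) (x : Fin d → ℝ) :
    quadForm M (c • x) = c ^ 2 * quadForm M x := by
  simp only [quadForm_eq_toBilin', map_smul, LinearMap.smul_apply, smul_eq_mul]
  ring

lemma Matrix.PosDef.toBilin'_apply_self_pos {S : Matrix (Fin d) (Fin d) ℝ} (hS : S.PosDef)
    {x : Fin d → ℝ} (hx : x ≠ 0) : 0 < S.toBilin' x x := by
  rw [Matrix.toBilin'_apply']
  exact hS.dotProduct_mulVec_pos hx

lemma quadForm_pos {S : Matrix (Fin d) (Fin d) ℝ} (hS : S.PosDef) {x : Fin d → ℝ}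
    (hx : x ≠ 0) : 0 < quadForm S x := by
  rw [quadForm_eq_toBilin']
  exact hS.toBilin'_apply_self_pos hx

lemma quadForm_nonneg {S : Matrix (Fin d) (Fin d) ℝ} (hS : S.PosDef) (x : Fin d → ℝ) :
    0 ≤ quadForm S x := by
  rw [quadForm_eq_toBilin', Matrix.toBilin'_apply']
  exact hS.posSemidef.dotProduct_mulVec_nonneg x

lemma Matrix.PosDef.isSymm {S : Matrix (Fin d) (Fin d) ℝ} (hS : S.PosDef) : S.IsSymm := by
  show S.transpose = S
  simpa [Matrix.IsHermitian, Matrix.conjTranspose_eq_transpose_of_trivial] using hS.isHermitian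

lemma Matrix.PosDef.isSymm_toBilin' {S : Matrix (Fin d) (Fin d) ℝ} (hS : S.PosDef) :
    S.toBilin'.IsSymm :=
  Matrix.isSymm_toBilin'_iff_isSymm.2 hS.isSymm

lemma sigNormalize_smul (S : Matrix (Fin d) (Fin d) ℝ) (x : Fin d → ℝ) {c : ℝ} (hc : 0 < c) :
    sigNormalize S (c • x) = sigNormalize S x := by
  rw [sigNormalize, sigNormalize, quadForm_smul, Real.sqrt_mul (sq_nonneg c), Real.sqrt_sq hc.le,
    smul_smul, mul_inv, mul_right_comm, inv_mul_cancel₀ hc.ne', one_mul]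

lemma quadForm_sigNormalize {S : Matrix (Fin d) (Fin d) ℝ} (hS : S.PosDef)
    (M : Matrix (Fin d) (Fin d) ℝ) (x : Fin d → ℝ) :
    quadForm M (sigNormalize S x) = quadForm M x / quadForm S x := by
  rw [sigNormalize, quadForm_smul, inv_pow, Real.sq_sqrt (quadForm_nonneg hS x), inv_mul_eq_div]

lemma ne_zero_of_sum_sq_eq_one {u : Fin d → ℝ} (hu : ∑ i, u i ^ 2 = 1) : u ≠ 0 := by
  rintro rfl
  simp at hu

lemma l2norm_pos {z : Fin d → ℝ} (hz : z ≠ 0) : 0 < l2norm z := by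
  obtain ⟨i, hi⟩ := Function.ne_iff.1 hz
  exact Real.sqrt_pos.2
    (Finset.sum_pos' (fun j _ => sq_nonneg (z j)) ⟨i, Finset.mem_univ i, sq_pos_of_ne_zero hi⟩)

def supportSubmodule (v : Fin d → ℝ) : Submodule ℝ (Fin d → ℝ) :=
  Submodule.pi {i | v i = 0} fun _ => ⊥

lemma mem_supportSubmodule {v z : Fin d → ℝ} :
    z ∈ supportSubmodule v ↔ ∀ i, v i = 0 → z i = 0 := by
  simp [supportSubmodule, Submodule.mem_pi]

lemma self_mem_supportSubmodule (v : Fin d → ℝ) : v ∈ supportSubmodule v :=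
  mem_supportSubmodule.2 fun _ h => h

lemma inv_l2norm_smul_mem_sparseUnit {v z : Fin d → ℝ} (hv : v ∈ sparseUnit s d)
    (hz : z ∈ supportSubmodule v) (hz0 : z ≠ 0) : (l2norm z)⁻¹ • z ∈ sparseUnit s d := by
  have hsq : l2norm z ^ 2 = ∑ i, z i ^ 2 := Real.sq_sqrt (Finset.sum_nonneg fun i _ => sq_nonneg _)
  refine ⟨?_, le_trans (Finset.card_le_card fun i => ?_) hv.2⟩
  · simp only [Pi.smul_apply, smul_eq_mul, mul_pow, ← Finset.mul_sum, ← hsq, inv_pow]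
    exact inv_mul_cancel₀ (pow_ne_zero 2 (l2norm_pos hz0).ne')
  · simp only [Finset.mem_filter, Finset.mem_univ, true_and, Pi.smul_apply, smul_eq_mul]
    exact fun hzi hvi => hzi (by rw [mem_supportSubmodule.1 hz i hvi, mul_zero])

lemma isCompact_setOf_sum_sq_eq_one (d : ℕ) : IsCompact {u : Fin d → ℝ | ∑ i, u i ^ 2 = 1} := by
  refine Metric.isCompact_of_isClosed_isBounded (isClosed_eq (by fun_prop) continuous_const)
    ((Metric.isBounded_closedBall (x := 0) (r := 1)).subset fun u hu => ?_)
  rw [Metric.mem_closedBall, dist_zero_right, pi_norm_le_iff_of_nonneg zero_le_one]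
  intro i
  rw [Real.norm_eq_abs, ← sq_le_one_iff_abs_le_one]
  exact hu ▸ Finset.single_le_sum (fun j _ => sq_nonneg (u j)) (Finset.mem_univ i)

lemma sparseUnit_subset_setOf_sum_sq_eq_one :
    sparseUnit s d ⊆ {u : Fin d → ℝ | ∑ i, u i ^ 2 = 1} :=
  fun _ hu => hu.1

end SparseQuadForm

section SparseExtrema

variable {s d : ℕ} {S : Matrix (Fin d) (Fin d) ℝ}

lemma quadForm_le_lamMaxS (S : Matrix (Fin d) (Fin d) ℝ) {u : Fin d → ℝ}
    (hu : u ∈ sparseUnit s d) : quadForm S u ≤ lamMaxS s d S := by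
  refine le_csSup (((isCompact_setOf_sum_sq_eq_one d).bddAbove_image
    (continuous_quadForm S).continuousOn).mono ?_) (Set.mem_image_of_mem _ hu)
  exact Set.image_mono sparseUnit_subset_setOf_sum_sq_eq_one

lemma lamMinS_le_quadForm (hS : S.PosDef) {u : Fin d → ℝ} (hu : u ∈ sparseUnit s d) :
    lamMinS s d S ≤ quadForm S u :=
  csInf_le ⟨0, Set.forall_mem_image.2 fun u _ => quadForm_nonneg hS u⟩ (Set.mem_image_of_mem _ hu)

/-- The minimum of `quadForm S` over the compact unit sphere is attained, hence positive. -/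
lemma lamMinS_pos (hS : S.PosDef) (hne : (sparseUnit s d).Nonempty) : 0 < lamMinS s d S := by
  obtain ⟨u₀, hu₀, hmin⟩ := (isCompact_setOf_sum_sq_eq_one d).exists_isMinOn
    (hne.mono sparseUnit_subset_setOf_sum_sq_eq_one) (continuous_quadForm S).continuousOn
  refine (quadForm_pos hS (ne_zero_of_sum_sq_eq_one hu₀)).trans_le
    (le_csInf (hne.image _) (Set.forall_mem_image.2 fun u hu => ?_))
  exact hmin (sparseUnit_subset_setOf_sum_sq_eq_one hu)

lemma quadForm_le_lamMaxS_mul_l2norm_sq (S : Matrix (Fin d) (Fin d) ℝ) {v z : Fin d → ℝ}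
    (hv : v ∈ sparseUnit s d) (hz : z ∈ supportSubmodule v) :
    quadForm S z ≤ lamMaxS s d S * l2norm z ^ 2 := by
  rcases eq_or_ne z 0 with rfl | hz0
  · simp [quadForm, l2norm]
  have hl : l2norm z ≠ 0 := (l2norm_pos hz0).ne'
  calc quadForm S z = l2norm z ^ 2 * quadForm S ((l2norm z)⁻¹ • z) := by
        rw [quadForm_smul, ← mul_assoc, ← mul_pow, mul_inv_cancel₀ hl, one_pow, one_mul]
    _ ≤ l2norm z ^ 2 * lamMaxS s d S := by
        gcongr
        exact quadForm_le_lamMaxS S (inv_l2norm_smul_mem_sparseUnit hv hz hz0)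
    _ = lamMaxS s d S * l2norm z ^ 2 := mul_comm _ _

lemma bddAbove_abs_quadForm_sigNormalize (hS : S.PosDef) (M : Matrix (Fin d) (Fin d) ℝ) :
    BddAbove ((fun u => |quadForm M (sigNormalize S u)|) '' sparseUnit s d) := by
  have hcont : ContinuousOn (fun u => |quadForm M u / quadForm S u|)
      {u : Fin d → ℝ | ∑ i, u i ^ 2 = 1} :=
    ((continuous_quadForm M).continuousOn.div (continuous_quadForm S).continuousOn
      fun u hu => (quadForm_pos hS (ne_zero_of_sum_sq_eq_one hu)).ne').abs
  simp only [← quadForm_sigNormalize hS] at hcont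
  exact ((isCompact_setOf_sum_sq_eq_one d).bddAbove_image hcont).mono
    (Set.image_mono sparseUnit_subset_setOf_sum_sq_eq_one)

lemma abs_quadForm_le_sSup_mul_quadForm (hS : S.PosDef) (M : Matrix (Fin d) (Fin d) ℝ)
    {v z : Fin d → ℝ} (hv : v ∈ sparseUnit s d) (hz : z ∈ supportSubmodule v) :
    |quadForm M z| ≤
      sSup ((fun u => |quadForm M (sigNormalize S u)|) '' sparseUnit s d) * quadForm S z := by
  rcases eq_or_ne z 0 with rfl | hz0
  · simp [quadForm]
  have hq := quadForm_pos hS hz0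
  have hle := le_csSup (bddAbove_abs_quadForm_sigNormalize hS M)
    (Set.mem_image_of_mem _ (inv_l2norm_smul_mem_sparseUnit hv hz hz0))
  rwa [sigNormalize_smul S z (inv_pos.2 (l2norm_pos hz0)), quadForm_sigNormalize hS, abs_div,
    abs_of_pos hq, div_le_iff₀ hq] at hle

end SparseExtrema

section SigNormalize

variable {s d : ℕ} {S : Matrix (Fin d) (Fin d) ℝ}

lemma quadForm_sigNormalize_self (hS : S.PosDef) {x : Fin d → ℝ} (hx : x ≠ 0) :
    quadForm S (sigNormalize S x) = 1 := by
  rw [quadForm_sigNormalize hS, div_self (quadForm_pos hS hx).ne']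

lemma sqrt_quadForm_sigNormalize_add_le (hS : S.PosDef) {x y : Fin d → ℝ} (hx : x ≠ 0)
    (hy : y ≠ 0) : √(quadForm S (sigNormalize S x + sigNormalize S y)) ≤ 2 := by
  have h := hS.isSymm_toBilin'.apply_add_add_apply_sub_sub (sigNormalize S x) (sigNormalize S y)
  simp only [← quadForm_eq_toBilin', quadForm_sigNormalize_self hS hx,
    quadForm_sigNormalize_self hS hy] at h
  rw [Real.sqrt_le_left zero_le_two]
  linarith [quadForm_nonneg hS (sigNormalize S x - sigNormalize S y)]

lemma sqrt_quadForm_sigNormalize_sub_le (hS : S.PosDef) {v w : Fin d → ℝ}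
    (hv : v ∈ sparseUnit s d) (hw : w ∈ sparseUnit s d) (hwv : w ∈ supportSubmodule v) :
    √(quadForm S (sigNormalize S v - sigNormalize S w)) ≤ gammaS s d S * l2norm (v - w) := by
  have hqv := quadForm_pos hS (ne_zero_of_sum_sq_eq_one hv.1)
  have hqw := quadForm_pos hS (ne_zero_of_sum_sq_eq_one hw.1)
  have hnormalize : √(quadForm S v) * √(quadForm S w) *
      quadForm S (sigNormalize S v - sigNormalize S w) ≤ quadForm S (v - w) := by
    have h := LinearMap.BilinForm.sqrt_mul_sqrt_mul_apply_normalize_sub_le hS.isSymm_toBilin'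
      (quadForm_eq_toBilin' S v ▸ hqv) (quadForm_eq_toBilin' S w ▸ hqw)
    simp only [← quadForm_eq_toBilin'] at h
    exact h
  have hmin := lamMinS_pos hS ⟨v, hv⟩
  have hlmin : lamMinS s d S ≤ √(quadForm S v) * √(quadForm S w) := by
    rw [← Real.sqrt_mul hqv.le, Real.le_sqrt hmin.le (by positivity), sq]
    exact mul_le_mul (lamMinS_le_quadForm hS hv) (lamMinS_le_quadForm hS hw) hmin.le hqv.le
  have hmax := quadForm_le_lamMaxS_mul_l2norm_sq S hv
    (Submodule.sub_mem _ (self_mem_supportSubmodule v) hwv)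
  have hγ : gammaS s d S ^ 2 = lamMaxS s d S / lamMinS s d S :=
    Real.sq_sqrt (div_nonneg (hqv.le.trans (quadForm_le_lamMaxS S hv)) hmin.le)
  rw [Real.sqrt_le_left (by unfold gammaS l2norm; positivity), mul_pow, hγ, div_mul_eq_mul_div,
    le_div_iff₀ hmin]
  nlinarith [quadForm_nonneg hS (sigNormalize S v - sigNormalize S w)]

end SigNormalize

theorem rescaled_quadform_net_bound_general
    (s d : ℕ)
    (S : Matrix (Fin d) (Fin d) ℝ) (hS : S.PosDef)
    (M : Matrix (Fin d) (Fin d) ℝ) (hM : M.IsSymm)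
    (v w : Fin d → ℝ) (hv : v ∈ sparseUnit s d) (hw : w ∈ sparseUnit s d)
    (hsupp : ∀ i, v i = 0 ↔ w i = 0) :
    |(|quadForm M (sigNormalize S v)| - |quadForm M (sigNormalize S w)|)| ≤
      2 * gammaS s d S * l2norm (v - w) *
        sSup ((fun u => |quadForm M (sigNormalize S u)|) '' sparseUnit s d) := by
  set Q := sSup ((fun u => |quadForm M (sigNormalize S u)|) '' sparseUnit s d)
  set a := sigNormalize S v
  set b := sigNormalize S w
  have hM' : M.toBilin'.IsSymm := Matrix.isSymm_toBilin'_iff_isSymm.2 hM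
  have hwv : w ∈ supportSubmodule v := mem_supportSubmodule.2 fun i hi => (hsupp i).1 hi
  have ha : a ∈ supportSubmodule v := Submodule.smul_mem _ _ (self_mem_supportSubmodule v)
  have hb : b ∈ supportSubmodule v := Submodule.smul_mem _ _ hwv
  have hQ : 0 ≤ Q := (abs_nonneg _).trans
    (le_csSup (bddAbove_abs_quadForm_sigNormalize hS M) (Set.mem_image_of_mem _ hv))
  have hbilin : |M.toBilin' (a - b) (a + b)| ≤
      Q * √(quadForm S (a - b)) * √(quadForm S (a + b)) := by
    have h := LinearMap.BilinForm.abs_apply_le_of_abs_apply_self_le hM' hS.isSymm_toBilin'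
      (fun _ hx => hS.toBilin'_apply_self_pos hx) (W := supportSubmodule v) (Q := Q)
      (fun z hz => by
        rw [← quadForm_eq_toBilin', ← quadForm_eq_toBilin']
        exact abs_quadForm_le_sSup_mul_quadForm hS M hv hz) (sub_mem ha hb) (add_mem ha hb)
    simpa only [← quadForm_eq_toBilin'] using h
  calc |(|quadForm M a| - |quadForm M b|)| ≤ |quadForm M a - quadForm M b| :=
        abs_abs_sub_abs_le_abs_sub _ _
    _ = |M.toBilin' (a - b) (a + b)| := by
        rw [hM'.apply_sub_add, quadForm_eq_toBilin', quadForm_eq_toBilin']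
    _ ≤ Q * (gammaS s d S * l2norm (v - w)) * 2 := by
        refine hbilin.trans (mul_le_mul (mul_le_mul_of_nonneg_left
          (sqrt_quadForm_sigNormalize_sub_le hS hv hw hwv) hQ)
          (sqrt_quadForm_sigNormalize_add_le hS (ne_zero_of_sum_sq_eq_one hv.1)
            (ne_zero_of_sum_sq_eq_one hw.1)) (Real.sqrt_nonneg _) ?_)
        unfold gammaS l2norm
        positivity
    _ = 2 * gammaS s d S * l2norm (v - w) * Q := by ring

/-- **Lemma 3** (generalized ε-net argument for the rescaled spectral norm). -/
theorem rescaled_quadform_net_bound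
    (s d : ℕ) (hs : 1 ≤ s) (hsd : s ≤ d)
    (S : Matrix (Fin d) (Fin d) ℝ) (hS : S.PosDef)
    (M : Matrix (Fin d) (Fin d) ℝ) (hM : M.IsSymm)
    (v w : Fin d → ℝ) (hv : v ∈ sparseUnit s d) (hw : w ∈ sparseUnit s d)
    (hsupp : ∀ i, v i = 0 ↔ w i = 0) :
    |(|quadForm M (sigNormalize S v)| - |quadForm M (sigNormalize S w)|)| ≤
      2 * gammaS s d S * l2norm (v - w) *
        sSup ((fun u => |quadForm M (sigNormalize S u)|) '' sparseUnit s d) :=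
  rescaled_quadform_net_bound_general s d S hS M hM v w hv hw hsupp
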